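/- In the Recursive Walk, the flaws labeling the roots of the recursion forest (one root per invocation of ADDRESS by the top-level procedure ELIMINATE) are pairwise distinct and pairwise non-adjacent in the undirected graph G(R) where {f,g} is an edge iff both f→g and g→f are arcs of R; the same holds for the flaws labeling the children of any vertex of the forest. -/

import Mathlib

/-!
Every call `ADDRESS(i, σ)` returning at `τ` satisfies `U(τ) ⊆ U(σ) ∖ ({i} ∪ Γ i)`, where `U(σ)`
(here `flawsAt f σ`) is the set of flaws present at `σ`: the step taken on `σ` can only introduce
flaws of `Γ i` (or reintroduce `i`), and the loop does not exit while a flaw of `Γ i` is present,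
each recursive call preserving that bound on what it leaves behind. Along a sequence of sibling
calls the sets `U` therefore only shrink, so the flaw addressed by a later sibling was already
present when the earlier call `ADDRESS(idx k, ·)` returned; it thus differs from `idx k` and lies
outside `Γ (idx k)`.
-/

universe u v

mutual
  /-- `RecAddr f A Γ i σ τ` models an invocation `ADDRESS(i,σ)` of the Recursive Walk that
  returns at state `τ`. -/
  inductive RecAddr {ι : Type u} {Ω : Type v} [LinearOrder ι]
      (f : ι → Set Ω) (A : ι → Ω → Set Ω) (Γ : ι → Set ι) : ι → Ω → Ω → Prop
    | step {i : ι} {σ τ₀ τ : Ω} : σ ∈ f i → τ₀ ∈ A i σ →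
        RecLoop f A Γ i τ₀ τ → RecAddr f A Γ i σ τ
  /-- The while-loop of `ADDRESS(i,·)`. -/
  inductive RecLoop {ι : Type u} {Ω : Type v} [LinearOrder ι]
      (f : ι → Set Ω) (A : ι → Ω → Set Ω) (Γ : ι → Set ι) : ι → Ω → Ω → Prop
    | done {i : ι} {σ : Ω} : (∀ j, σ ∈ f j → j ∉ Γ i) → RecLoop f A Γ i σ σ
    | more {i j : ι} {σ σ' τ : Ω} : σ ∈ f j → j ∈ Γ i →
        (∀ k, σ ∈ f k → k ∈ Γ i → k ≤ j) →
        RecAddr f A Γ j σ σ' → RecLoop f A Γ i σ' τ → RecLoop f A Γ i σ τ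
end

variable {ι : Type u} {Ω : Type v} {f : ι → Set Ω} {A : ι → Ω → Set Ω} {Γ : ι → Set ι}

def flawsAt (f : ι → Set Ω) (σ : Ω) : Set ι := {j | σ ∈ f j}

def ContainsCausality (f : ι → Set Ω) (A : ι → Ω → Set Ω) (Γ : ι → Set ι) : Prop :=
  ∀ i σ τ, σ ∈ f i → τ ∈ A i σ → ∀ j, τ ∈ f j → (j = i ∨ σ ∉ f j) → j ∈ Γ i

theorem ContainsCausality.flawsAt_diff_subset (hC : ContainsCausality f A Γ) {i : ι} {σ τ : Ω}
    (hσ : σ ∈ f i) (hτ : τ ∈ A i σ) : flawsAt f τ \ Γ i ⊆ flawsAt f σ \ {i} := by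
  rintro j ⟨hj, hjΓ⟩
  refine ⟨by_contra fun hσj ↦ hjΓ (hC i σ τ hσ hτ j hj (Or.inr hσj)), fun hji ↦ ?_⟩
  exact hjΓ (hC i σ τ hσ hτ j hj (Or.inl hji))

variable [LinearOrder ι]

mutual
theorem RecAddr.flawsAt_subset (hC : ContainsCausality f A Γ) {i : ι} {σ τ : Ω} :
    RecAddr f A Γ i σ τ → flawsAt f τ ⊆ flawsAt f σ \ insert i (Γ i)
  | .step hσ hτ₀ hloop => fun _ hj ↦
    let ⟨hj₀, hjΓ⟩ := hloop.flawsAt_subset hC hj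
    let ⟨hjσ, hji⟩ := hC.flawsAt_diff_subset hσ hτ₀ ⟨hj₀, hjΓ⟩
    ⟨hjσ, fun h ↦ h.elim hji hjΓ⟩

theorem RecLoop.flawsAt_subset (hC : ContainsCausality f A Γ) {i : ι} {σ τ : Ω} :
    RecLoop f A Γ i σ τ → flawsAt f τ ⊆ flawsAt f σ \ Γ i
  | .done hdone => fun j hj ↦ ⟨hj, hdone j hj⟩
  | .more _ _ _ hcall hloop => fun _ hj ↦
    let ⟨hj', hjΓ⟩ := hloop.flawsAt_subset hC hj
    ⟨(hcall.flawsAt_subset hC hj').1, hjΓ⟩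
end

theorem flawsAt_subset_of_le_of_recAddr (hC : ContainsCausality f A Γ) {n : ℕ} {σ : ℕ → Ω}
    {idx : ℕ → ι} (hcall : ∀ k < n, RecAddr f A Γ (idx k) (σ k) (σ (k + 1)))
    {k l : ℕ} (hkl : k ≤ l) (hln : l ≤ n) : flawsAt f (σ l) ⊆ flawsAt f (σ k) := by
  induction l, hkl using Nat.le_induction with
  | base => rfl
  | succ l _ ih =>
    exact ((hcall l hln).flawsAt_subset hC).trans Set.sdiff_subset |>.trans (ih (by omega))

theorem pairwise_ne_nonadj_of_recAddr (hC : ContainsCausality f A Γ) {n : ℕ} {σ : ℕ → Ω}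
    {idx : ℕ → ι} (hcall : ∀ k < n, RecAddr f A Γ (idx k) (σ k) (σ (k + 1)))
    (hmem : ∀ k < n, σ k ∈ f (idx k)) {k l : ℕ} (hkl : k < l) (hln : l < n) :
    idx k ≠ idx l ∧ ¬(idx k ∈ Γ (idx l) ∧ idx l ∈ Γ (idx k)) := by
  have hl : idx l ∈ flawsAt f (σ (k + 1)) :=
    flawsAt_subset_of_le_of_recAddr hC hcall hkl hln.le (hmem l hln)
  obtain ⟨-, hlk⟩ := (hcall k (hkl.trans hln)).flawsAt_subset hC hl
  exact ⟨fun h ↦ hlk (.inl h.symm), fun h ↦ hlk (.inr h.2)⟩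

/-- In the Recursive Walk, the flaws labeling the roots of the recursion forest (the
successive invocations of ADDRESS made by ELIMINATE, each on the greatest present flaw)
are pairwise distinct and pairwise non-adjacent in the undirected graph `G(R)`, where
`{f,g}` is an edge iff both `f → g` and `g → f` are arcs of `R`; and the same holds for
the flaws labeling the children of any vertex, i.e. for the successive recursive
invocations made inside `ADDRESS(i,·)` (each on the greatest present flaw of `Γ i`). -/
theorem stmt_12 {ι : Type u} {Ω : Type v} [LinearOrder ι]
    (f : ι → Set Ω) (A : ι → Ω → Set Ω) (Γ : ι → Set ι)
    (hC : ∀ i σ τ, σ ∈ f i → τ ∈ A i σ → ∀ j, τ ∈ f j → (j = i ∨ σ ∉ f j) → j ∈ Γ i)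
    (n : ℕ) (σ : ℕ → Ω) (idx : ℕ → ι) :
    ((∀ k < n, σ k ∈ f (idx k) ∧ (∀ j, σ k ∈ f j → j ≤ idx k) ∧
        RecAddr f A Γ (idx k) (σ k) (σ (k + 1))) →
      ∀ k l, k < l → l < n →
        idx k ≠ idx l ∧ ¬(idx k ∈ Γ (idx l) ∧ idx l ∈ Γ (idx k))) ∧
    (∀ i : ι, (∀ k < n, σ k ∈ f (idx k) ∧ idx k ∈ Γ i ∧
        (∀ j, σ k ∈ f j → j ∈ Γ i → j ≤ idx k) ∧
        RecAddr f A Γ (idx k) (σ k) (σ (k + 1))) →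
      ∀ k l, k < l → l < n →
        idx k ≠ idx l ∧ ¬(idx k ∈ Γ (idx l) ∧ idx l ∈ Γ (idx k))) :=
  ⟨fun H _ _ hkl hln ↦ pairwise_ne_nonadj_of_recAddr hC (fun k hk ↦ (H k hk).2.2)
      (fun k hk ↦ (H k hk).1) hkl hln,
    fun _ H _ _ hkl hln ↦ pairwise_ne_nonadj_of_recAddr hC (fun k hk ↦ (H k hk).2.2.2)
      (fun k hk ↦ (H k hk).1) hkl hln⟩
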